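/- arXiv:1806.06265 — 4 statements merged into one kernel-verified Lean document; each statement's English description precedes it below -/
import Mathlib

section
/- Let Y be an infinitesimal dynamical symmetry ([Y,X_h] = 0) on a symplectic manifold with i(X_h)ω = dh. If L(Y)ω = c·ω for a real constant c, then d(L(Y)h) = c·dh; hence locally L(Y)h = c·h + k for some constant k, and L(Y)h is a conserved quantity. -/
/-- Let `Y` be an infinitesimal dynamical symmetry (`[Y,X_h] = 0`) on a
symplectic manifold with `i(X_h)ω = dh`. If `L(Y)ω = c·ω` for a real constant `c`, then
`d(L(Y)h) = c·dh`; hence locally `L(Y)h = c·h + k` for some constant `k` (i.e. `dk = 0`),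
and `L(Y)h` is a conserved quantity: `L(X_h)(L(Y)h) = 0`. -/
theorem conformal_symmetry_quantity {XV F Ω1 Ω2 : Type*} [Zero XV]
    [AddCommGroup F] [Module ℝ F] [AddCommGroup Ω1] [Module ℝ Ω1]
    [AddCommGroup Ω2] [Module ℝ Ω2]
    (br : XV → XV → XV)
    (d0 : F →ₗ[ℝ] Ω1)
    (i1 : XV → Ω1 →ₗ[ℝ] F) (i2 : XV → Ω2 →ₗ[ℝ] Ω1)
    (hi2zero : ∀ σ : Ω2, i2 (0 : XV) σ = 0)
    (L0 : XV → F →ₗ[ℝ] F) (L1 : XV → Ω1 →ₗ[ℝ] Ω1) (L2 : XV → Ω2 →ₗ[ℝ] Ω2)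
    (hCartan0 : ∀ (Z : XV) (f : F), L0 Z f = i1 Z (d0 f))
    (hAlt : ∀ (Z : XV) (σ : Ω2), i1 Z (i2 Z σ) = 0)
    (hComm2 : ∀ (Z W : XV) (σ : Ω2), L1 Z (i2 W σ) - i2 W (L2 Z σ) = i2 (br Z W) σ)
    (hdL0 : ∀ (Z : XV) (f : F), d0 (L0 Z f) = L1 Z (d0 f))
    (ω : Ω2) (h : F) (Xh : XV) (hXh : i2 Xh ω = d0 h)
    (Y : XV) (hdyn : br Y Xh = 0)
    (c : ℝ) (hconf : L2 Y ω = c • ω) :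
    d0 (L0 Y h) = c • d0 h
      ∧ (∃ k : F, d0 k = 0 ∧ L0 Y h = c • h + k)
      ∧ L0 Xh (L0 Y h) = 0 := by
  have key : d0 (L0 Y h) = c • d0 h := by
    have hc := hComm2 Y Xh ω
    rw [hdyn, hi2zero, sub_eq_zero] at hc
    rw [hdL0, ← hXh, hc, hconf, map_smul, hXh]
  refine ⟨key, ⟨L0 Y h - c • h, ?_, by abel⟩, ?_⟩
  · rw [map_sub, map_smul, key, sub_self]
  · rw [hCartan0, key, map_smul, ← hXh, hAlt, smul_zero]
end

section
/- Let Y be an infinitesimal dynamical symmetry ([Y,X_h] = 0) on a symplectic manifold with i(X_h)ω = dh. Then i(X_h)(L(Y)ω) = d(L(Y)h); in particular X_h is a Hamiltonian vector field for the closed 2-form L(Y)ω with Hamiltonian L(Y)h, and f := L(Y)h is a conserved quantity: L(X_h)f = 0. -/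
/-- Let `Y` be an infinitesimal dynamical symmetry (`[Y,X_h] = 0`) on a
symplectic manifold with `i(X_h)ω = dh`. Then `i(X_h)(L(Y)ω) = d(L(Y)h)`; in particular
`X_h` is a Hamiltonian vector field for the closed 2-form `L(Y)ω` with Hamiltonian `L(Y)h`
(so `X_h` is bi-Hamiltonian), and `f := L(Y)h` is a conserved quantity: `L(X_h)f = 0`. -/
theorem biHamiltonian_conserved_quantity {XV F Ω1 Ω2 Ω3 : Type*} [Zero XV]
    [AddCommGroup F] [Module ℝ F] [AddCommGroup Ω1] [Module ℝ Ω1]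
    [AddCommGroup Ω2] [Module ℝ Ω2] [AddCommGroup Ω3] [Module ℝ Ω3]
    (br : XV → XV → XV)
    (d0 : F →ₗ[ℝ] Ω1) (d2 : Ω2 →ₗ[ℝ] Ω3)
    (i1 : XV → Ω1 →ₗ[ℝ] F) (i2 : XV → Ω2 →ₗ[ℝ] Ω1)
    (hi2zero : ∀ σ : Ω2, i2 (0 : XV) σ = 0)
    (L0 : XV → F →ₗ[ℝ] F) (L1 : XV → Ω1 →ₗ[ℝ] Ω1)
    (L2 : XV → Ω2 →ₗ[ℝ] Ω2) (L3 : XV → Ω3 →ₗ[ℝ] Ω3)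
    (hCartan0 : ∀ (Z : XV) (f : F), L0 Z f = i1 Z (d0 f))
    (hAlt : ∀ (Z : XV) (σ : Ω2), i1 Z (i2 Z σ) = 0)
    (hComm2 : ∀ (Z W : XV) (σ : Ω2), L1 Z (i2 W σ) - i2 W (L2 Z σ) = i2 (br Z W) σ)
    (hdL0 : ∀ (Z : XV) (f : F), d0 (L0 Z f) = L1 Z (d0 f))
    (hdL2 : ∀ (Z : XV) (σ : Ω2), d2 (L2 Z σ) = L3 Z (d2 σ))
    (ω : Ω2) (hclosed : d2 ω = 0)
    (h : F) (Xh : XV) (hXh : i2 Xh ω = d0 h)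
    (Y : XV) (hdyn : br Y Xh = 0) :
    i2 Xh (L2 Y ω) = d0 (L0 Y h)
      ∧ d2 (L2 Y ω) = 0
      ∧ L0 Xh (L0 Y h) = 0 := by

  have key : i2 Xh (L2 Y ω) = d0 (L0 Y h) := by
    have := hComm2 Y Xh ω
    rw [hdyn, hi2zero, sub_eq_zero] at this
    rw [← this, hXh, hdL0]
  refine ⟨key, ?_, ?_⟩
  · rw [hdL2, hclosed, map_zero]
  · rw [hCartan0, ← key, hAlt]
end

section
/- (Generalized Noether theorem, order N) Let Y satisfy [Y,X_h] = 0, L^N(Y)ω = 0, and L(Y)h = 0, on a symplectic manifold with i(X_h)ω = dh. Then: (1) the 1-form L^{N−1}(Y)i(Y)ω is closed; (2) any local function f with df = L^{N−1}(Y)i(Y)ω satisfies L(X_h)f = 0. -/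
/-- **Generalized Noether theorem, order N.** Let `Y` satisfy
`[Y,X_h] = 0`, `L^N(Y)ω = 0`, and `L(Y)h = 0` on a symplectic manifold with
`i(X_h)ω = dh`. Then: (1) the 1-form `L^{N−1}(Y)(i(Y)ω)` is closed; (2) any (local)
function `f` with `df = L^{N−1}(Y)(i(Y)ω)` satisfies `L(X_h)f = 0`. -/
theorem generalized_noether {XV F Ω1 Ω2 Ω3 : Type*} [Zero XV]
    [AddCommGroup F] [Module ℝ F] [AddCommGroup Ω1] [Module ℝ Ω1]
    [AddCommGroup Ω2] [Module ℝ Ω2] [AddCommGroup Ω3] [Module ℝ Ω3]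
    (br : XV → XV → XV)
    (d0 : F →ₗ[ℝ] Ω1) (d1 : Ω1 →ₗ[ℝ] Ω2) (d2 : Ω2 →ₗ[ℝ] Ω3)
    (i1 : XV → Ω1 →ₗ[ℝ] F) (i2 : XV → Ω2 →ₗ[ℝ] Ω1) (i3 : XV → Ω3 →ₗ[ℝ] Ω2)
    (hi1zero : ∀ α : Ω1, i1 (0 : XV) α = 0)
    (L0 : XV → F →ₗ[ℝ] F) (L1 : XV → Ω1 →ₗ[ℝ] Ω1) (L2 : XV → Ω2 →ₗ[ℝ] Ω2)
    (hCartan0 : ∀ (Z : XV) (f : F), L0 Z f = i1 Z (d0 f))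
    (hCartan2 : ∀ (Z : XV) (σ : Ω2), L2 Z σ = i3 Z (d2 σ) + d1 (i2 Z σ))
    (hdL1 : ∀ (Z : XV) (α : Ω1), d1 (L1 Z α) = L2 Z (d1 α))
    (hComm1 : ∀ (Z W : XV) (α : Ω1), L0 Z (i1 W α) - i1 W (L1 Z α) = i1 (br Z W) α)
    (hAnti : ∀ (Z W : XV) (σ : Ω2), i1 Z (i2 W σ) = - i1 W (i2 Z σ))
    (ω : Ω2) (hclosed : d2 ω = 0)
    (h : F) (Xh : XV) (hXh : i2 Xh ω = d0 h)
    (Y : XV) (N : ℕ) (hN : 1 ≤ N)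
    (hdyn : br Y Xh = 0)
    (horder : (fun σ : Ω2 => L2 Y σ)^[N] ω = 0)
    (hham : L0 Y h = 0) :
    d1 ((fun α : Ω1 => L1 Y α)^[N - 1] (i2 Y ω)) = 0
      ∧ ∀ f : F, d0 f = (fun α : Ω1 => L1 Y α)^[N - 1] (i2 Y ω) → L0 Xh f = 0 := by

  have hd : ∀ n (β : Ω1), d1 ((fun α : Ω1 => L1 Y α)^[n] β)
      = (fun σ : Ω2 => L2 Y σ)^[n] (d1 β) := by
    intro n
    induction n with
    | zero => intro β; simp
    | succ n ih =>
      intro β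
      rw [Function.iterate_succ_apply', Function.iterate_succ_apply']
      simp only [hdL1, ih]
  have hL0zero : ∀ n, (fun f : F => L0 Y f)^[n] (0 : F) = 0 := by
    intro n
    induction n with
    | zero => rfl
    | succ n ih => rw [Function.iterate_succ_apply', ih]; simp
  have hi : ∀ n (β : Ω1), i1 Xh ((fun α : Ω1 => L1 Y α)^[n] β)
      = (fun f : F => L0 Y f)^[n] (i1 Xh β) := by
    intro n
    induction n with
    | zero => intro β; rfl
    | succ n ih =>
      intro β
      rw [Function.iterate_succ_apply', Function.iterate_succ_apply']
      have := hComm1 Y Xh ((fun α : Ω1 => L1 Y α)^[n] β)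
      rw [hdyn, hi1zero, sub_eq_zero] at this
      rw [← this, ih]
  have hbase : i1 Xh (i2 Y ω) = 0 := by
    rw [hAnti, hXh, ← hCartan0, hham, neg_zero]
  constructor
  · rw [hd]
    have hω : d1 (i2 Y ω) = L2 Y ω := by
      rw [hCartan2 Y ω, hclosed]; simp
    rw [hω, ← Function.iterate_succ_apply, Nat.succ_eq_add_one, Nat.sub_add_cancel hN, horder]
  · intro f hf
    rw [hCartan0, hf, hi, hbase, hL0zero]
end

section
/- With θ_{(j)} := L^j(Y)i(Y)ω and Y an infinitesimal dynamical symmetry ([Y,X_h] = 0, i(X_h)ω = dh, dω = 0): (1) L(X_h)θ_{(j)} = 0; (2) i(X_h)θ_{(j)} = −L^{j+1}(Y)h; (3) i(X_h)dθ_{(j)} = d(L^{j+1}(Y)h). -/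
/-- With `θ_(j) := L^j(Y)(i(Y)ω)` and `Y` an infinitesimal dynamical
symmetry (`[Y,X_h] = 0`, `i(X_h)ω = dh`, `dω = 0`):
(1) `L(X_h)θ_(j) = 0`; (2) `i(X_h)θ_(j) = −L^{j+1}(Y)h`;
(3) `i(X_h)dθ_(j) = d(L^{j+1}(Y)h)`. -/
theorem theta_forms_dynamics {XV F Ω1 Ω2 Ω3 : Type*} [AddCommGroup XV]
    [AddCommGroup F] [Module ℝ F] [AddCommGroup Ω1] [Module ℝ Ω1]
    [AddCommGroup Ω2] [Module ℝ Ω2] [AddCommGroup Ω3] [Module ℝ Ω3]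
    (br : XV → XV → XV) (hbr_anti : ∀ Z W : XV, br Z W = - br W Z)
    (d0 : F →ₗ[ℝ] Ω1) (d1 : Ω1 →ₗ[ℝ] Ω2) (d2 : Ω2 →ₗ[ℝ] Ω3)
    (i1 : XV → Ω1 →ₗ[ℝ] F) (i2 : XV → Ω2 →ₗ[ℝ] Ω1) (i3 : XV → Ω3 →ₗ[ℝ] Ω2)
    (hi1zero : ∀ α : Ω1, i1 (0 : XV) α = 0)
    (hi2zero : ∀ σ : Ω2, i2 (0 : XV) σ = 0)
    (L0 : XV → F →ₗ[ℝ] F) (L1 : XV → Ω1 →ₗ[ℝ] Ω1) (L2 : XV → Ω2 →ₗ[ℝ] Ω2)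
    (hL1zero : ∀ α : Ω1, L1 (0 : XV) α = 0)
    (hCartan0 : ∀ (Z : XV) (f : F), L0 Z f = i1 Z (d0 f))
    (hCartan1 : ∀ (Z : XV) (α : Ω1), L1 Z α = i2 Z (d1 α) + d0 (i1 Z α))
    (hCartan2 : ∀ (Z : XV) (σ : Ω2), L2 Z σ = i3 Z (d2 σ) + d1 (i2 Z σ))
    (hdd0 : ∀ g : F, d1 (d0 g) = 0)
    (hComm1 : ∀ (Z W : XV) (α : Ω1), L0 Z (i1 W α) - i1 W (L1 Z α) = i1 (br Z W) α)
    (hComm2 : ∀ (Z W : XV) (σ : Ω2), L1 Z (i2 W σ) - i2 W (L2 Z σ) = i2 (br Z W) σ)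
    (hLL1 : ∀ (Z W : XV) (α : Ω1), L1 Z (L1 W α) - L1 W (L1 Z α) = L1 (br Z W) α)
    (hAnti : ∀ (Z W : XV) (σ : Ω2), i1 Z (i2 W σ) = - i1 W (i2 Z σ))
    (ω : Ω2) (hclosed : d2 ω = 0)
    (h : F) (Xh : XV) (hXh : i2 Xh ω = d0 h)
    (Y : XV) (hdyn : br Y Xh = 0)
    (θ : ℕ → Ω1) (hθ : ∀ j, θ j = (fun α : Ω1 => L1 Y α)^[j] (i2 Y ω)) :
    (∀ j, L1 Xh (θ j) = 0)
      ∧ (∀ j, i1 Xh (θ j) = - (fun f : F => L0 Y f)^[j + 1] h)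
      ∧ (∀ j, i2 Xh (d1 (θ j)) = d0 ((fun f : F => L0 Y f)^[j + 1] h)) := by

  have hbr' : br Xh Y = 0 := by rw [hbr_anti, hdyn, neg_zero]
  -- L2 Xh ω = 0
  have hLω : L2 Xh ω = 0 := by
    rw [hCartan2, hclosed, hXh, hdd0, map_zero, zero_add]
  -- (1)
  have h1 : ∀ j, L1 Xh (θ j) = 0 := by
    intro j
    rw [hθ]
    induction j with
    | zero =>
      simp only [Function.iterate_zero, id]
      have := hComm2 Xh Y ω
      rw [hbr', hi2zero, hLω, map_zero, sub_zero] at this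
      exact this
    | succ n ih =>
      rw [Function.iterate_succ_apply']
      have := hLL1 Xh Y ((fun α : Ω1 => L1 Y α)^[n] (i2 Y ω))
      rw [hbr', hL1zero, ih, map_zero, sub_zero] at this
      exact this
  -- (2)
  have h2 : ∀ j, i1 Xh (θ j) = - (fun f : F => L0 Y f)^[j + 1] h := by
    intro j
    rw [hθ]
    induction j with
    | zero =>
      simp only [Function.iterate_zero, zero_add, Function.iterate_one, id]
      rw [hAnti, hXh, ← hCartan0]
    | succ n ih =>
      rw [Function.iterate_succ_apply', Function.iterate_succ_apply' (fun f : F => L0 Y f) (n+1)]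
      have := hComm1 Y Xh ((fun α : Ω1 => L1 Y α)^[n] (i2 Y ω))
      rw [hdyn, hi1zero, sub_eq_zero] at this
      rw [← this, ih, map_neg]
  refine ⟨h1, h2, fun j => ?_⟩
  have := hCartan1 Xh (θ j)
  rw [h1, h2, map_neg] at this
  have := this.symm
  rw [add_neg_eq_zero] at this
  exact this
end
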